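/- arXiv:2411.19272 — 3 statements merged into one kernel-verified Lean document; each statement's English description precedes it below -/
import Mathlib

section
/- Let g, h: X → ℝ ∪ {+∞} be proper generalized polyhedral convex functions with representations g(x) = max_{i∈I}(⟨u_i*, x⟩ + α_i) for x ∈ dom g and h(x) = max_{j∈J}(⟨v_j*, x⟩ + β_j) for x ∈ dom h. Let C = {x ∈ X : A(x) = y, ⟨x_k*, x⟩ ≤ α_k, k = 1, …, p} be nonempty, where A: X → Y is a continuous surjective linear map into a locally convex Hausdorff topological vector space Y, y ∈ Y, x_k* ∈ X*, α_k ∈ ℝ. Then a point x̄ ∈ int(dom g) ∩ int(dom h) ∩ C is a local solution of the problem: minimize g(x) − h(x) subject to x ∈ C, if and only if co{v_j* : j ∈ J(x̄)} ⊆ co{u_i* : i ∈ I(x̄)} + pos{x_k* : k ∈ K(x̄)} + (ker A)^⊥, where K(x̄) = {k ∈ {1,…,p} : ⟨x_k*, x̄⟩ = α_k}. -/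
/-!
Near `x₀` both `g` and `h` are finite maxima of continuous affine functions, and near `x₀` such a
maximum is attained only by pieces active at `x₀`. Hence `g - h` has a local minimum on `C` at `x₀`
iff `⟨v_j, d⟩ ≤ max_{i ∈ I(x₀)} ⟨u_i, d⟩` for every active `j` and every direction `d` of the cone
`{d ∈ ker A | ⟨x_k*, d⟩ ≤ 0, k ∈ K(x₀)}` of feasible directions at `x₀`. By Farkas' lemma in
`ker A × ℝ`, these inequalities say exactly that `v_j ∈ co{u_i} + pos{x_k*} + (ker A)^⊥`; as that
set is convex, this passes to the convex hull of the active `v_j`.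
-/

open Pointwise Topology

/-- A generalized polyhedral convex set: the intersection of a closed affine subspace
with finitely many closed half-spaces given by continuous linear functionals. -/
def IsGPCS (X : Type*) [AddCommGroup X] [Module ℝ X] [TopologicalSpace X] (S : Set X) : Prop :=
  ∃ (L : AffineSubspace ℝ X) (p : ℕ) (a : Fin p → (X →L[ℝ] ℝ)) (c : Fin p → ℝ),
    IsClosed (L : Set X) ∧ S = {x : X | x ∈ L ∧ ∀ k, a k x ≤ c k}

/-- The epigraph of an extended-real-valued function. -/
def epigraph {X : Type*} (ψ : X → EReal) : Set (X × ℝ) := {p | ψ p.1 ≤ (p.2 : EReal)}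

/-- A generalized polyhedral convex function: one whose epigraph is a generalized
polyhedral convex set in `X × ℝ`. -/
def IsGPCF (X : Type*) [AddCommGroup X] [Module ℝ X] [TopologicalSpace X] (ψ : X → EReal) : Prop :=
  IsGPCS (X × ℝ) (epigraph ψ)

/-- A proper function: not identically `+∞` and never `-∞`. -/
def ProperFn {X : Type*} (ψ : X → EReal) : Prop := (∃ x, ψ x ≠ ⊤) ∧ ∀ x, ψ x ≠ ⊥

/-- Convexity of an extended-real-valued function, via convexity of the epigraph. -/
def ConvexFn {X : Type*} [AddCommGroup X] [Module ℝ X] (ψ : X → EReal) : Prop :=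
  Convex ℝ (epigraph ψ)

/-- The effective domain of an extended-real-valued function. -/
def domFn {X : Type*} (ψ : X → EReal) : Set X := {x | ψ x ≠ ⊤}

open Classical in
/-- The indicator function of a set: `0` on the set, `+∞` outside. -/
noncomputable def indFn {X : Type*} (C : Set X) : X → EReal := fun x => if x ∈ C then 0 else ⊤

open Classical in
/-- The DC objective `g - h` with the convention `(+∞) - (+∞) = +∞`. -/
noncomputable def dcObj {X : Type*} (g h : X → EReal) : X → EReal :=
  fun x => if g x = ⊤ ∧ h x = ⊤ then ⊤ else g x - h x

/-- The subdifferential (in the sense of convex analysis) of `φ` at `x₀`. -/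
def SubdiffAt {X : Type*} [AddCommGroup X] [Module ℝ X] [TopologicalSpace X]
    (φ : X → EReal) (x₀ : X) : Set (X →L[ℝ] ℝ) :=
  {p | ∀ x : X, ((p x - p x₀ : ℝ) : EReal) ≤ φ x - φ x₀}

/-- The subdifferential of a function defined on the dual space, with values in `X`
(the dual of `X*` in the weak* topology). -/
def SubdiffStarAt {X : Type*} [AddCommGroup X] [Module ℝ X] [TopologicalSpace X]
    (Φ : (X →L[ℝ] ℝ) → EReal) (p₀ : X →L[ℝ] ℝ) : Set X :=
  {x | ∀ p : X →L[ℝ] ℝ, ((p x - p₀ x : ℝ) : EReal) ≤ Φ p - Φ p₀}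

/-- The normal cone to a convex set `C` at `x₀ ∈ C`. -/
def normalConeAt {X : Type*} [AddCommGroup X] [Module ℝ X] [TopologicalSpace X]
    (C : Set X) (x₀ : X) : Set (X →L[ℝ] ℝ) :=
  {p | ∀ x ∈ C, p x - p x₀ ≤ 0}

/-- The Fenchel conjugate function. -/
noncomputable def conjFn {X : Type*} [AddCommGroup X] [Module ℝ X] [TopologicalSpace X]
    (φ : X → EReal) : (X →L[ℝ] ℝ) → EReal :=
  fun p => ⨆ x : X, (((p x : ℝ) : EReal) - φ x)

/-- `x₀` is a local solution of: minimize `g - h` over `C`. -/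
def IsLocalSolution {X : Type*} [TopologicalSpace X] (g h : X → EReal) (C : Set X)
    (x₀ : X) : Prop :=
  x₀ ∈ C ∧ ∃ U ∈ nhds x₀, ∀ x ∈ C ∩ U, dcObj g h x₀ ≤ dcObj g h x

/-- `x₀` is a (global) solution of: minimize `g - h` over `C`. -/
def IsSolution {X : Type*} (g h : X → EReal) (C : Set X) (x₀ : X) : Prop :=
  x₀ ∈ C ∧ ∀ x ∈ C, dcObj g h x₀ ≤ dcObj g h x

/-- `S` is open in the relative topology of `C`. -/
def RelOpenIn {X : Type*} [TopologicalSpace X] (C S : Set X) : Prop :=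
  ∃ V : Set X, IsOpen V ∧ S = C ∩ V

/-- A semi-closed generalized polyhedral convex subset of `C`: the intersection of a
generalized polyhedral convex subset of `C` with a convex subset of `C` that is open
in the relative topology of `C`. -/
def IsSemiClosedGPCSIn {X : Type*} [AddCommGroup X] [Module ℝ X] [TopologicalSpace X]
    (C S : Set X) : Prop :=
  ∃ P Q : Set X, IsGPCS X P ∧ P ⊆ C ∧ Convex ℝ Q ∧ Q ⊆ C ∧ RelOpenIn C Q ∧ S = P ∩ Q

open Filter

theorem exists_nonneg_eq_sum_of_nonpos_imp_nonpos {ι V : Type*} [AddCommGroup V] [Module ℝ V]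
    (s : Finset ι) (f : ι → V →ₗ[ℝ] ℝ) (g : V →ₗ[ℝ] ℝ)
    (hfg : ∀ x, (∀ i ∈ s, f i x ≤ 0) → g x ≤ 0) :
    ∃ lam : ι → ℝ, (∀ i, 0 ≤ lam i) ∧ g = ∑ i ∈ s, lam i • f i := by
  classical
  induction s using Finset.induction_on generalizing V with
  | empty =>
    refine ⟨0, fun _ => le_rfl, LinearMap.ext fun x => ?_⟩
    have := hfg (-x) (by simp)
    simpa using le_antisymm (hfg x (by simp)) (by simpa using this)
  | insert a s ha ih =>
    -- Restricted to `ker (f a)`, the constraint `f a ≤ 0` disappears.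
    obtain ⟨lam, hlam, hsum⟩ := ih (fun i => f i ∘ₗ (LinearMap.ker (f a)).subtype)
      (g ∘ₗ (LinearMap.ker (f a)).subtype) fun x hx =>
        hfg x (Finset.forall_mem_insert _ _ _ |>.2 ⟨(LinearMap.mem_ker.1 x.2).le, hx⟩)
    obtain ⟨μ, hμ⟩ : ∃ μ : ℝ, μ • f a = g - ∑ i ∈ s, lam i • f i := by
      rw [← Submodule.mem_span_singleton, ← Set.range_const (ι := Unit)]
      refine mem_span_of_iInf_ker_le_ker fun x hx => ?_
      have hx : f a x = 0 := by simpa using hx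
      simpa [sub_eq_zero] using LinearMap.congr_fun hsum ⟨x, hx⟩
    have sum_update (l : ι → ℝ) (b : ℝ) :
        ∑ i ∈ s, Function.update l a b i • f i = ∑ i ∈ s, l i • f i :=
      Finset.sum_congr rfl fun i hi => by rw [Function.update_of_ne (ne_of_mem_of_not_mem hi ha)]
    by_cases hμ0 : 0 ≤ μ
    · refine ⟨Function.update lam a μ, fun i => ?_, ?_⟩
      · rcases eq_or_ne i a with rfl | hi <;> simp [*]
      · rw [Finset.sum_insert ha, sum_update, Function.update_self, hμ]
        abel
    -- With `μ < 0` the constraint `f a ≤ 0` is redundant.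
    · obtain ⟨lam', hlam', hsum'⟩ := ih f g fun x hx => by
        by_cases hax : f a x ≤ 0
        · exact hfg x (Finset.forall_mem_insert _ _ _ |>.2 ⟨hax, hx⟩)
        · have hres := LinearMap.congr_fun hμ x
          have hs : ∑ i ∈ s, lam i * f i x ≤ 0 :=
            Finset.sum_nonpos fun i hi => mul_nonpos_of_nonneg_of_nonpos (hlam i) (hx i hi)
          simp only [LinearMap.smul_apply, LinearMap.sub_apply, LinearMap.sum_apply,
            smul_eq_mul] at hres
          nlinarith
      refine ⟨Function.update lam' a 0, fun i => ?_, ?_⟩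
      · rcases eq_or_ne i a with rfl | hi <;> simp [*]
      · rw [Finset.sum_insert ha, sum_update, Function.update_self, hsum']
        simp

section DualCharacterization

variable {X : Type*} [AddCommGroup X] [Module ℝ X] [TopologicalSpace X] {ι κ : Type*}
  (u : ι → X →L[ℝ] ℝ) {I : Finset ι} (hI : I.Nonempty)

theorem apply_le_sup'_of_mem_convexHull {φ : X →L[ℝ] ℝ} (hφ : φ ∈ convexHull ℝ (u '' I))
    (d : X) : φ d ≤ I.sup' hI fun i => u i d := by
  refine convexHull_min ?_
    (convex_halfSpace_le (f := fun ψ : X →L[ℝ] ℝ => ψ d) ⟨fun _ _ => rfl, fun _ _ => rfl⟩ _) hφ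
  rintro _ ⟨i, hi, rfl⟩
  exact Finset.le_sup' (fun i => u i d) hi

theorem mem_convexHull_add_cone_add_annihilator_iff (w : κ → X →L[ℝ] ℝ) (K : Finset κ)
    (W : Submodule ℝ X) (φ : X →L[ℝ] ℝ) :
    φ ∈ convexHull ℝ (u '' I) + {ψ | ∃ lam : κ → ℝ, (∀ k, 0 ≤ lam k) ∧ ψ = ∑ k ∈ K, lam k • w k} +
        {ψ | ∀ z ∈ W, ψ z = 0} ↔
      ∀ d ∈ W, (∀ k ∈ K, w k d ≤ 0) → φ d ≤ I.sup' hI fun i => u i d := by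
  constructor
  · rintro ⟨_, ⟨q, hq, _, ⟨lam, hlam, rfl⟩, rfl⟩, s, hs, rfl⟩ d hd hK
    have hr : ∑ k ∈ K, lam k * w k d ≤ 0 :=
      Finset.sum_nonpos fun k hk => mul_nonpos_of_nonneg_of_nonpos (hlam k) (hK k hk)
    simpa [hs d hd] using add_le_add (apply_le_sup'_of_mem_convexHull u hI hq d) hr
  · intro h
    -- Farkas on `W × ℝ`: `φ d ≤ t` follows from `u i d ≤ t` (`i ∈ I`) and `w k d ≤ 0` (`k ∈ K`).
    let pr : W × ℝ →ₗ[ℝ] X := W.subtype ∘ₗ LinearMap.fst ℝ W ℝ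
    let F : ι ⊕ κ → W × ℝ →ₗ[ℝ] ℝ := Sum.elim
      (fun i => (u i : X →ₗ[ℝ] ℝ) ∘ₗ pr - LinearMap.snd ℝ W ℝ) fun k => (w k : X →ₗ[ℝ] ℝ) ∘ₗ pr
    obtain ⟨lam, hlam, hsum⟩ := exists_nonneg_eq_sum_of_nonpos_imp_nonpos (I.disjSum K) F
      ((φ : X →ₗ[ℝ] ℝ) ∘ₗ pr - LinearMap.snd ℝ W ℝ) fun ⟨⟨d, hd⟩, t⟩ hz => by
        have hu : ∀ i ∈ I, u i d ≤ t := fun i hi => by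
          simpa [F, pr] using hz (.inl i) (Finset.inl_mem_disjSum.2 hi)
        have hw : ∀ k ∈ K, w k d ≤ 0 := fun k hk => by
          simpa [F, pr] using hz (.inr k) (Finset.inr_mem_disjSum.2 hk)
        simpa [pr] using (h d hd hw).trans ((Finset.sup'_le_iff hI _).2 hu)
    rw [Finset.sum_disjSum] at hsum
    have hθ : 1 = ∑ i ∈ I, lam (.inl i) := by
      simpa [F, pr] using LinearMap.congr_fun hsum (0, 1)
    have hφ : ∀ d ∈ W, φ d = ∑ i ∈ I, lam (.inl i) * u i d + ∑ k ∈ K, lam (.inr k) * w k d :=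
      fun d hd => by simpa [F, pr] using LinearMap.congr_fun hsum (⟨d, hd⟩, 0)
    refine ⟨_, ⟨∑ i ∈ I, lam (.inl i) • u i, ?_, ∑ k ∈ K, lam (.inr k) • w k,
      ⟨fun k => lam (.inr k), fun k => hlam _, rfl⟩, rfl⟩,
      φ - ∑ i ∈ I, lam (.inl i) • u i - ∑ k ∈ K, lam (.inr k) • w k, fun z hz => ?_,
      by rw [sub_sub]; exact add_sub_cancel _ _⟩
    · exact (convex_convexHull ℝ _).sum_mem (fun i _ => hlam _) hθ.symm
        fun i hi => subset_convexHull ℝ _ ⟨i, hi, rfl⟩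
    · simp [hφ z hz]

end DualCharacterization

theorem tendsto_add_smul_nhdsGT_zero {X : Type*} [AddCommGroup X] [Module ℝ X] [TopologicalSpace X]
    [ContinuousAdd X] [ContinuousSMul ℝ X] (x₀ d : X) :
    Tendsto (fun t : ℝ => x₀ + t • d) (𝓝[>] 0) (𝓝 x₀) :=
  (Continuous.tendsto' (by fun_prop) 0 x₀ (by simp)).mono_left nhdsWithin_le_nhds

section MaxAffine

variable {X : Type*} [AddCommGroup X] [Module ℝ X] [TopologicalSpace X]
  {ι : Type*} [Fintype ι] [Nonempty ι] (u : ι → X →L[ℝ] ℝ) (a : ι → ℝ)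

noncomputable def maxAffine (x : X) : ℝ :=
  Finset.univ.sup' Finset.univ_nonempty fun i => u i x + a i

noncomputable def activeIdx (x₀ : X) : Finset ι :=
  Finset.univ.filter fun i => u i x₀ + a i = maxAffine u a x₀

theorem le_maxAffine (i : ι) (x : X) : u i x + a i ≤ maxAffine u a x :=
  Finset.le_sup' (fun i => u i x + a i) (Finset.mem_univ i)

theorem mem_activeIdx {x₀ : X} {i : ι} :
    i ∈ activeIdx u a x₀ ↔ u i x₀ + a i = maxAffine u a x₀ := by
  simp [activeIdx]

theorem activeIdx_nonempty (x₀ : X) : (activeIdx u a x₀).Nonempty := by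
  obtain ⟨i, -, hi⟩ := Finset.exists_mem_eq_sup' Finset.univ_nonempty fun i => u i x₀ + a i
  exact ⟨i, (mem_activeIdx u a).2 hi.symm⟩

/-- The one-sided directional derivative of `maxAffine u a` at `x₀` in the direction `d`. -/
noncomputable def maxAffineDirDeriv (x₀ d : X) : ℝ :=
  (activeIdx u a x₀).sup' (activeIdx_nonempty u a x₀) fun i => u i d

theorem eventually_exists_mem_activeIdx_maxAffine_eq (x₀ : X) :
    ∀ᶠ x in 𝓝 x₀, ∃ i ∈ activeIdx u a x₀, maxAffine u a x = u i x + a i := by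
  obtain ⟨i₀, hi₀⟩ := activeIdx_nonempty u a x₀
  -- Near `x₀`, every inactive piece stays below the active piece `i₀`.
  have hlt : ∀ᶠ x in 𝓝 x₀, ∀ j ∉ activeIdx u a x₀, u j x + a j < u i₀ x + a i₀ := by
    refine eventually_all.2 fun j => ?_
    by_cases hj : j ∈ activeIdx u a x₀
    · exact .of_forall fun _ h => absurd hj h
    · have hlt₀ : u j x₀ + a j < u i₀ x₀ + a i₀ := by
        rw [(mem_activeIdx u a).1 hi₀]
        exact (le_maxAffine u a j x₀).lt_of_ne (mt (mem_activeIdx u a).2 hj)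
      filter_upwards [ContinuousAt.eventually_lt (f := fun x => u j x + a j)
        (g := fun x => u i₀ x + a i₀) (by fun_prop) (by fun_prop) hlt₀] with x hx
      exact fun _ => hx
  filter_upwards [hlt] with x hx
  obtain ⟨i, -, hi⟩ := Finset.exists_mem_eq_sup' Finset.univ_nonempty fun i => u i x + a i
  refine ⟨i, by_contra fun hi' => ?_, hi⟩
  exact (hx i hi').not_ge (hi ▸ le_maxAffine u a i₀ x)

theorem maxAffine_add_dirDeriv_le (x₀ d : X) :
    maxAffine u a x₀ + maxAffineDirDeriv u a x₀ d ≤ maxAffine u a (x₀ + d) := by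
  obtain ⟨i, hi, hid⟩ := Finset.exists_mem_eq_sup' (activeIdx_nonempty u a x₀) fun i => u i d
  have hle := le_maxAffine u a i (x₀ + d)
  rw [map_add] at hle
  rw [maxAffineDirDeriv, hid, ← (mem_activeIdx u a).1 hi]
  linarith

theorem eventually_maxAffine_add_smul_le [ContinuousAdd X] [ContinuousSMul ℝ X] (x₀ d : X) :
    ∀ᶠ t in 𝓝[>] (0 : ℝ),
      maxAffine u a (x₀ + t • d) ≤ maxAffine u a x₀ + t * maxAffineDirDeriv u a x₀ d := by
  filter_upwards [(tendsto_add_smul_nhdsGT_zero x₀ d).eventually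
      (eventually_exists_mem_activeIdx_maxAffine_eq u a x₀),
    self_mem_nhdsWithin] with t ⟨i, hi, hit⟩ (ht : 0 < t)
  have hid : u i d ≤ maxAffineDirDeriv u a x₀ d := Finset.le_sup' (fun i => u i d) hi
  rw [hit, map_add, map_smul, smul_eq_mul, ← (mem_activeIdx u a).1 hi]
  nlinarith

end MaxAffine

theorem eventually_add_smul_mem_polyhedron {X Y ν : Type*} [AddCommGroup X] [Module ℝ X]
    [TopologicalSpace X] [AddCommGroup Y] [Module ℝ Y] [TopologicalSpace Y] [Finite ν]
    (A : X →L[ℝ] Y) (y : Y) (xs : ν → X →L[ℝ] ℝ) (c : ν → ℝ) {x₀ d : X}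
    (hx₀ : x₀ ∈ {x | A x = y ∧ ∀ k, xs k x ≤ c k}) (hd : A d = 0)
    (hK : ∀ k, xs k x₀ = c k → xs k d ≤ 0) :
    ∀ᶠ t in 𝓝[>] (0 : ℝ), x₀ + t • d ∈ {x | A x = y ∧ ∀ k, xs k x ≤ c k} := by
  have hxs : ∀ k, ∀ᶠ t in 𝓝[>] (0 : ℝ), xs k x₀ + t * xs k d ≤ c k := fun k => by
    rcases (hx₀.2 k).eq_or_lt with hk | hk
    · filter_upwards [self_mem_nhdsWithin] with t (ht : 0 < t)
      nlinarith [hK k hk]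
    · refine nhdsWithin_le_nhds (Tendsto.eventually_le_const hk ?_)
      exact Continuous.tendsto' (by fun_prop) 0 _ (by simp)
  filter_upwards [eventually_all.2 hxs] with t ht
  exact ⟨by simp [hx₀.1, hd], fun k => by simpa using ht k⟩

section LocalMin

variable {X Y ι κ ν : Type*} [AddCommGroup X] [Module ℝ X] [TopologicalSpace X]
  [ContinuousAdd X] [ContinuousSMul ℝ X] [AddCommGroup Y] [Module ℝ Y] [TopologicalSpace Y]
  [Fintype ι] [Nonempty ι] [Fintype κ] [Nonempty κ] [Finite ν]
  (u : ι → X →L[ℝ] ℝ) (a : ι → ℝ) (v : κ → X →L[ℝ] ℝ) (b : κ → ℝ)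
  (A : X →L[ℝ] Y) (y : Y) (xs : ν → X →L[ℝ] ℝ) (c : ν → ℝ)

theorem isLocalMinOn_maxAffine_sub_maxAffine_iff {x₀ : X}
    (hx₀ : x₀ ∈ {x | A x = y ∧ ∀ k, xs k x ≤ c k}) :
    IsLocalMinOn (fun x => maxAffine u a x - maxAffine v b x)
        {x | A x = y ∧ ∀ k, xs k x ≤ c k} x₀ ↔
      ∀ j ∈ activeIdx v b x₀, ∀ d ∈ LinearMap.ker (A : X →ₗ[ℝ] Y),
        (∀ k, xs k x₀ = c k → xs k d ≤ 0) → v j d ≤ maxAffineDirDeriv u a x₀ d := by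
  rw [IsLocalMinOn, IsMinFilter, eventually_nhdsWithin_iff]
  constructor
  · intro hmin j hj d hd hK
    obtain ⟨t, hmin, hC, hG, ht⟩ := (((tendsto_add_smul_nhdsGT_zero x₀ d).eventually hmin).and
      ((eventually_add_smul_mem_polyhedron A y xs c hx₀ hd hK).and
      ((eventually_maxAffine_add_smul_le u a x₀ d).and self_mem_nhdsWithin))).exists
    have hH := le_maxAffine v b j (x₀ + t • d)
    rw [map_add, map_smul, smul_eq_mul] at hH
    have hj' := (mem_activeIdx v b).1 hj
    have hle := hmin hC
    exact le_of_mul_le_mul_left (by linarith) (show (0 : ℝ) < t from ht)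
  · intro h
    filter_upwards [eventually_exists_mem_activeIdx_maxAffine_eq v b x₀] with x ⟨j, hj, hHx⟩ hx
    have hd : x - x₀ ∈ LinearMap.ker (A : X →ₗ[ℝ] Y) := by simp [hx.1, hx₀.1]
    have hK : ∀ k, xs k x₀ = c k → xs k (x - x₀) ≤ 0 := fun k hk => by
      simpa [hk] using hx.2 k
    have hvj := h j hj (x - x₀) hd hK
    have hG := maxAffine_add_dirDeriv_le u a x₀ (x - x₀)
    rw [add_sub_cancel] at hG
    rw [map_sub] at hvj
    have hj' := (mem_activeIdx v b).1 hj
    linarith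

end LocalMin

theorem isLocalSolution_iff_isLocalMinOn {X : Type*} [TopologicalSpace X] {g h : X → EReal}
    {G H : X → ℝ} {C : Set X} {x₀ : X} (hg : ∀ᶠ x in 𝓝 x₀, g x = G x)
    (hh : ∀ᶠ x in 𝓝 x₀, h x = H x) :
    IsLocalSolution g h C x₀ ↔ x₀ ∈ C ∧ IsLocalMinOn (fun x => G x - H x) C x₀ := by
  have hobj : ∀ᶠ x in 𝓝 x₀, dcObj g h x = ((G x - H x : ℝ) : EReal) := by
    filter_upwards [hg, hh] with x hgx hhx
    simp [dcObj, hgx, hhx, EReal.coe_sub]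
  rw [IsLocalSolution, IsLocalMinOn, IsMinFilter, eventually_nhdsWithin_iff]
  refine and_congr_right fun _ => ⟨fun ⟨U, hU, hmin⟩ => ?_, fun hmin => ?_⟩
  · filter_upwards [hU, hobj] with x hxU hx hxC
    have := hmin x ⟨hxC, hxU⟩
    rwa [hx, hobj.self_of_nhds, EReal.coe_le_coe_iff] at this
  · refine ⟨_, hmin.and hobj, fun x ⟨hxC, hx, hobjx⟩ => ?_⟩
    rw [hobjx, hobj.self_of_nhds, EReal.coe_le_coe_iff]
    exact hx hxC

theorem convexHull_subset_convexHull_add_cone_add_annihilator_iff {X ι κ ν : Type*}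
    [AddCommGroup X] [Module ℝ X] [TopologicalSpace X] (u : ι → X →L[ℝ] ℝ) {I : Finset ι}
    (hI : I.Nonempty) (v : κ → X →L[ℝ] ℝ) (J : Set κ) (w : ν → X →L[ℝ] ℝ) (K : Finset ν)
    (W : Submodule ℝ X) :
    convexHull ℝ (v '' J) ⊆ convexHull ℝ (u '' I) +
        {ψ | ∃ lam : ν → ℝ, (∀ k, 0 ≤ lam k) ∧ ψ = ∑ k ∈ K, lam k • w k} +
        {ψ | ∀ z ∈ W, ψ z = 0} ↔
      ∀ j ∈ J, ∀ d ∈ W, (∀ k ∈ K, w k d ≤ 0) → v j d ≤ I.sup' hI fun i => u i d := by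
  have hconv : Convex ℝ (convexHull ℝ (u '' I) +
      {ψ | ∃ lam : ν → ℝ, (∀ k, 0 ≤ lam k) ∧ ψ = ∑ k ∈ K, lam k • w k} +
      {ψ | ∀ z ∈ W, ψ z = 0}) := by
    intro φ hφ ψ hψ s t hs ht hst
    rw [mem_convexHull_add_cone_add_annihilator_iff u hI] at hφ hψ ⊢
    intro d hd hK
    calc (s • φ + t • ψ) d = s * φ d + t * ψ d := rfl
      _ ≤ s * I.sup' hI (fun i => u i d) + t * I.sup' hI (fun i => u i d) := by
        gcongr
        exacts [hφ d hd hK, hψ d hd hK]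
      _ = I.sup' hI (fun i => u i d) := by rw [← add_mul, hst, one_mul]
  rw [hconv.convexHull_subset_iff, Set.image_subset_iff]
  exact forall₂_congr fun j _ => mem_convexHull_add_cone_add_annihilator_iff u hI w K W (v j)

open Classical in
theorem stmt3_general {X : Type*} [AddCommGroup X] [Module ℝ X] [TopologicalSpace X]
    [IsTopologicalAddGroup X] [ContinuousSMul ℝ X]
    {Y : Type*} [AddCommGroup Y] [Module ℝ Y] [TopologicalSpace Y]
    (ι κ : Type*) [Fintype ι] [Nonempty ι] [Fintype κ] [Nonempty κ]
    (u : ι → (X →L[ℝ] ℝ)) (a : ι → ℝ) (v : κ → (X →L[ℝ] ℝ)) (b : κ → ℝ)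
    (g h : X → EReal)
    (hgrep : ∀ x ∈ domFn g,
      g x = ((Finset.univ.sup' Finset.univ_nonempty fun i => u i x + a i : ℝ) : EReal))
    (hhrep : ∀ x ∈ domFn h,
      h x = ((Finset.univ.sup' Finset.univ_nonempty fun j => v j x + b j : ℝ) : EReal))
    (A : X →L[ℝ] Y) (y : Y)
    (p : ℕ) (xs : Fin p → (X →L[ℝ] ℝ)) (c : Fin p → ℝ)
    (C : Set X) (hCdef : C = {x : X | A x = y ∧ ∀ k, xs k x ≤ c k})
    (x₀ : X) (hx₀ : x₀ ∈ interior (domFn g) ∩ interior (domFn h) ∩ C) :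
    IsLocalSolution g h C x₀ ↔
      convexHull ℝ (v '' {j : κ | ((v j x₀ + b j : ℝ) : EReal) = h x₀}) ⊆
        convexHull ℝ (u '' {i : ι | ((u i x₀ + a i : ℝ) : EReal) = g x₀}) +
          {w : X →L[ℝ] ℝ | ∃ lam : Fin p → ℝ, (∀ k, 0 ≤ lam k) ∧
            w = ∑ k ∈ Finset.univ.filter (fun k => xs k x₀ = c k), lam k • xs k} +
          {w : X →L[ℝ] ℝ | ∀ z : X, A z = 0 → w z = 0} := by
  obtain ⟨⟨hx₀g, hx₀h⟩, hx₀C⟩ := hx₀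
  have hg : ∀ᶠ x in 𝓝 x₀, g x = maxAffine u a x :=
    mem_of_superset (mem_interior_iff_mem_nhds.1 hx₀g) hgrep
  have hh : ∀ᶠ x in 𝓝 x₀, h x = maxAffine v b x :=
    mem_of_superset (mem_interior_iff_mem_nhds.1 hx₀h) hhrep
  have hI : {i | ((u i x₀ + a i : ℝ) : EReal) = g x₀} = activeIdx u a x₀ := by
    ext
    simp only [Set.mem_ofPred_eq, Finset.mem_coe, mem_activeIdx, hg.self_of_nhds,
      EReal.coe_eq_coe_iff]
  have hJ : {j | ((v j x₀ + b j : ℝ) : EReal) = h x₀} = activeIdx v b x₀ := by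
    ext
    simp only [Set.mem_ofPred_eq, Finset.mem_coe, mem_activeIdx, hh.self_of_nhds,
      EReal.coe_eq_coe_iff]
  subst hCdef
  rw [isLocalSolution_iff_isLocalMinOn hg hh, and_iff_right hx₀C,
    isLocalMinOn_maxAffine_sub_maxAffine_iff u a v b A y xs c hx₀C, hI, hJ]
  refine Iff.trans ?_ (convexHull_subset_convexHull_add_cone_add_annihilator_iff u
    (activeIdx_nonempty u a x₀) v _ xs _ (LinearMap.ker (A : X →ₗ[ℝ] Y))).symm
  simp [maxAffineDirDeriv]

open Classical in
/-- characterization of local solutions of a gpdc program with an explicitly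
described generalized polyhedral convex constraint set. -/
theorem stmt3 {X : Type*} [AddCommGroup X] [Module ℝ X] [TopologicalSpace X]
    [IsTopologicalAddGroup X] [ContinuousSMul ℝ X] [LocallyConvexSpace ℝ X] [T2Space X]
    {Y : Type*} [AddCommGroup Y] [Module ℝ Y] [TopologicalSpace Y]
    [IsTopologicalAddGroup Y] [ContinuousSMul ℝ Y] [LocallyConvexSpace ℝ Y] [T2Space Y]
    (ι κ : Type*) [Fintype ι] [Nonempty ι] [Fintype κ] [Nonempty κ]
    (u : ι → (X →L[ℝ] ℝ)) (a : ι → ℝ) (v : κ → (X →L[ℝ] ℝ)) (b : κ → ℝ)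
    (g h : X → EReal)
    (hg2 : ProperFn g) (hg3 : IsGPCF X g)
    (hh2 : ProperFn h) (hh3 : IsGPCF X h)
    (hgrep : ∀ x ∈ domFn g,
      g x = ((Finset.univ.sup' Finset.univ_nonempty fun i => u i x + a i : ℝ) : EReal))
    (hhrep : ∀ x ∈ domFn h,
      h x = ((Finset.univ.sup' Finset.univ_nonempty fun j => v j x + b j : ℝ) : EReal))
    (A : X →L[ℝ] Y) (hA : Function.Surjective A) (y : Y)
    (p : ℕ) (xs : Fin p → (X →L[ℝ] ℝ)) (c : Fin p → ℝ)
    (C : Set X) (hCdef : C = {x : X | A x = y ∧ ∀ k, xs k x ≤ c k}) (hC1 : C.Nonempty)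
    (x₀ : X) (hx₀ : x₀ ∈ interior (domFn g) ∩ interior (domFn h) ∩ C) :
    IsLocalSolution g h C x₀ ↔
      convexHull ℝ (v '' {j : κ | ((v j x₀ + b j : ℝ) : EReal) = h x₀}) ⊆
        convexHull ℝ (u '' {i : ι | ((u i x₀ + a i : ℝ) : EReal) = g x₀}) +
          {w : X →L[ℝ] ℝ | ∃ lam : Fin p → ℝ, (∀ k, 0 ≤ lam k) ∧
            w = ∑ k ∈ Finset.univ.filter (fun k => xs k x₀ = c k), lam k • xs k} +
          {w : X →L[ℝ] ℝ | ∀ z : X, A z = 0 → w z = 0} :=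
  stmt3_general ι κ u a v b g h hgrep hhrep A y p xs c C hCdef x₀ hx₀
end

section
/- Let g, h: X → ℝ ∪ {+∞} be proper generalized polyhedral convex functions and C ⊆ X a nonempty generalized polyhedral convex set with C ⊆ dom g and C ⊆ int(dom h). Then the set of local solutions of the problem: minimize g(x) − h(x) subject to x ∈ C, is the union of finitely many semi-closed generalized polyhedral convex subsets of C, and the set of global solutions is the union of finitely many generalized polyhedral convex sets. -/
open Pointwise Topology

/-! On `C`, `g` and `h` are finite maxima of continuous affine maps, `g = maxᵢ bᵢ` and
`h = maxⱼ aⱼ`: a polyhedral epigraph contains the vertical direction, so its fibre over `x` is a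
half-line cut out by finitely many affine inequalities whose slopes in `t` do not depend on `x`. On `C` the objective is therefore `minⱼ (g - aⱼ)`, each `g - aⱼ` being convex.

A point `z ∈ C` is a local solution iff it minimizes over `C` every `g - aⱼ` with `aⱼ` active at
`z`: near `z` only indices active at `z` can become active, and a local minimizer of the convex
function `g - aⱼ` is a global one. Grouping the local solutions by a nonempty set `T` of indices
with `aⱼ > aⱼ'` for `j ∈ T`, `j' ∉ T` (an open convex condition) gives the semi-closed pieces;
their closed parts are intersections of argmin sets of the `g - aⱼ`, which are sublevel sets and
hence polyhedral. A point of `C` is a global solution iff some `g - aⱼ` is at most the optimal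
value there. -/

section GeneralizedPolyhedral

variable {X : Type*} [AddCommGroup X] [Module ℝ X] [TopologicalSpace X]

theorem isGPCS_univ : IsGPCS X Set.univ :=
  ⟨⊤, 0, Fin.elim0, Fin.elim0, by simp, by ext; simp⟩

theorem isGPCS_empty : IsGPCS X ∅ :=
  ⟨⊥, 0, Fin.elim0, Fin.elim0, by simp, by ext; simp [AffineSubspace.notMem_bot]⟩

theorem isGPCS_setOf_le [IsTopologicalAddGroup X] (f : X →ᴬ[ℝ] ℝ) (c : ℝ) :
    IsGPCS X {x | f x ≤ c} := by
  refine ⟨⊤, 1, ![f.contLinear], ![c - f 0], by simp, ?_⟩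
  ext x
  have hf : f x = f.contLinear x + f 0 := by simpa using f.map_vadd 0 x
  simp [hf, le_sub_iff_add_le]

theorem IsGPCS.inter {S T : Set X} (hS : IsGPCS X S) (hT : IsGPCS X T) : IsGPCS X (S ∩ T) := by
  obtain ⟨L, p, a, c, hL, rfl⟩ := hS
  obtain ⟨L', p', a', c', hL', rfl⟩ := hT
  refine ⟨L ⊓ L', p + p', Fin.append a a', Fin.append c c', hL.inter hL', ?_⟩
  ext x
  simp only [Set.mem_inter_iff, Set.mem_ofPred_eq, AffineSubspace.mem_inf_iff,
    Fin.forall_fin_add, Fin.append_left, Fin.append_right]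
  tauto

theorem IsGPCS.iInter {ι : Type*} [Finite ι] {S : ι → Set X} (hS : ∀ i, IsGPCS X (S i)) :
    IsGPCS X (⋂ i, S i) := by
  classical
  cases nonempty_fintype ι
  suffices ∀ s : Finset ι, IsGPCS X (⋂ i ∈ s, S i) by simpa using this Finset.univ
  intro s
  induction s using Finset.induction_on with
  | empty => simpa using isGPCS_univ
  | insert i s _ ih => rw [Finset.set_biInter_insert]; exact (hS i).inter ih

theorem IsGPCS.convex {S : Set X} (hS : IsGPCS X S) : Convex ℝ S := by
  obtain ⟨L, p, a, c, -, rfl⟩ := hS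
  have : {x | x ∈ L ∧ ∀ k, a k x ≤ c k} = (L : Set X) ∩ ⋂ k, {x | a k x ≤ c k} := by
    ext; simp
  rw [this]
  exact L.convex.inter (convex_iInter fun k => convex_halfSpace_le (a k).toLinearMap.isLinear _)

theorem isGPCS_sep_isMinOn {f : X → ℝ} {C : Set X} (hf : ∀ c, IsGPCS X {x | x ∈ C ∧ f x ≤ c}) :
    IsGPCS X {x | x ∈ C ∧ IsMinOn f C x} := by
  rcases Set.eq_empty_or_nonempty {x | x ∈ C ∧ IsMinOn f C x} with hempty | ⟨x₀, hx₀C, hx₀⟩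
  · exact hempty ▸ isGPCS_empty
  convert hf (f x₀) using 1
  ext x
  exact and_congr_right fun _ =>
    ⟨fun hx => isMinOn_iff.1 hx x₀ hx₀C, fun hx => isMinOn_iff.2 fun y hy => hx.trans (hx₀ hy)⟩

theorem IsGPCS.isSemiClosedGPCSIn_inter {P C V : Set X} (hP : IsGPCS X P) (hPC : P ⊆ C)
    (hC : Convex ℝ C) (hV : Convex ℝ V) (hVo : IsOpen V) : IsSemiClosedGPCSIn C (P ∩ (C ∩ V)) :=
  ⟨P, C ∩ V, hP, hPC, hC.inter hV, Set.inter_subset_left, ⟨V, hVo, rfl⟩, rfl⟩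

variable [IsTopologicalAddGroup X] {C : Set X} {ι κ : Type*} [Finite ι] [Nonempty ι]

theorem IsGPCS.sep_ciSup_sub_le (hC : IsGPCS X C) (b : ι → X →ᴬ[ℝ] ℝ) (a : X →ᴬ[ℝ] ℝ) (c : ℝ) :
    IsGPCS X {x | x ∈ C ∧ (⨆ i, b i x) - a x ≤ c} := by
  have : {x | x ∈ C ∧ (⨆ i, b i x) - a x ≤ c} = C ∩ ⋂ i, {x | (b i - a) x ≤ c} := by
    ext x
    simp [ciSup_le_iff (Finite.bddAbove_range fun i => b i x)]
  rw [this]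
  exact hC.inter (IsGPCS.iInter fun i => isGPCS_setOf_le _ _)

theorem IsGPCS.sep_forall_mem_isMinOn [Finite κ] (hC : IsGPCS X C) (b : ι → X →ᴬ[ℝ] ℝ)
    (a : κ → X →ᴬ[ℝ] ℝ) (T : Set κ) :
    IsGPCS X {x | x ∈ C ∧ ∀ j ∈ T, IsMinOn (fun x => (⨆ i, b i x) - a j x) C x} := by
  have : {x | x ∈ C ∧ ∀ j ∈ T, IsMinOn (fun x => (⨆ i, b i x) - a j x) C x} =
      C ∩ ⋂ j : T, {x | x ∈ C ∧ IsMinOn (fun x => (⨆ i, b i x) - a j x) C x} := by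
    ext x
    simp only [Set.mem_inter_iff, Set.mem_iInter, Set.mem_ofPred_eq, Subtype.forall]
    exact and_congr_right fun hx => forall₂_congr fun _ _ => (and_iff_right hx).symm
  rw [this]
  exact hC.inter (IsGPCS.iInter fun j => isGPCS_sep_isMinOn (hC.sep_ciSup_sub_le b (a j)))

end GeneralizedPolyhedral

section OneDimensional

variable {κ : Type*} {β d : κ → ℝ} {r : ℝ}

theorem nonpos_of_forall_le_iff_forall_mul_le (h : ∀ t, r ≤ t ↔ ∀ k, β k * t ≤ d k) (k : κ) :
    β k ≤ 0 := by
  by_contra! hpos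
  set t := max r ((d k + 1) / β k)
  have hle : β k * t ≤ d k := (h t).1 (le_max_left _ _) k
  have hgt : d k + 1 ≤ t * β k := (div_le_iff₀ hpos).1 (le_max_right _ _)
  linarith [mul_comm t (β k)]

theorem exists_neg_of_forall_le_iff_forall_mul_le (h : ∀ t, r ≤ t ↔ ∀ k, β k * t ≤ d k) :
    ∃ k, β k < 0 := by
  by_contra! hnonneg
  have hzero (k : κ) : β k = 0 :=
    le_antisymm (nonpos_of_forall_le_iff_forall_mul_le h k) (hnonneg k)
  have : r ≤ r - 1 := (h _).2 fun k => by simpa [hzero k] using (h r).1 le_rfl k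
  linarith

theorem eq_ciSup_div_of_forall_le_iff_forall_mul_le [Finite κ] [Nonempty {k // β k < 0}]
    (h : ∀ t, r ≤ t ↔ ∀ k, β k * t ≤ d k) : r = ⨆ k : {k // β k < 0}, d k / β k := by
  refine le_antisymm ((h _).2 fun k => ?_) (ciSup_le fun k => ?_)
  · rcases (nonpos_of_forall_le_iff_forall_mul_le h k).lt_or_eq with hk | hk
    · have := le_ciSup (Finite.bddAbove_range fun k : {k // β k < 0} => d k / β k) ⟨k, hk⟩
      rw [div_le_iff_of_neg hk] at this
      linarith
    · simpa [hk] using (h r).1 le_rfl k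
  · rw [div_le_iff_of_neg k.2, mul_comm]
    exact (h r).1 le_rfl k

end OneDimensional

section Epigraph

variable {X : Type*} [AddCommGroup X] [Module ℝ X]

theorem vertical_mem_direction_of_epigraph_subset {ψ : X → EReal} {M : AffineSubspace ℝ (X × ℝ)}
    (hM : epigraph ψ ⊆ M) {x : X} (hx : ψ x ≠ ⊤) : ((0 : X), (1 : ℝ)) ∈ M.direction := by
  have hmem (s : ℝ) (hs : (ψ x).toReal ≤ s) : (x, s) ∈ M :=
    hM ((EReal.le_coe_toReal hx).trans (EReal.coe_le_coe_iff.2 hs))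
  simpa using M.vsub_mem_direction (hmem _ (le_add_of_nonneg_right zero_le_one)) (hmem _ le_rfl)

theorem AffineSubspace.mk_mem_of_vertical_mem_direction {M : AffineSubspace ℝ (X × ℝ)}
    (hv : ((0 : X), (1 : ℝ)) ∈ M.direction) {x : X} {s : ℝ} (hx : (x, s) ∈ M) (t : ℝ) :
    (x, t) ∈ M := by
  simpa [Prod.ext_iff] using M.vadd_mem_of_mem_direction (M.direction.smul_mem (t - s) hv) hx

variable [TopologicalSpace X]

theorem le_iff_forall_mul_le_of_epigraph_eq {ψ : X → EReal} {M : AffineSubspace ℝ (X × ℝ)}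
    {p : ℕ} {A : Fin p → X × ℝ →L[ℝ] ℝ} {c : Fin p → ℝ}
    (hepi : epigraph ψ = {q | q ∈ M ∧ ∀ k, A k q ≤ c k})
    (hv : ((0 : X), (1 : ℝ)) ∈ M.direction) {x : X} {r : ℝ} (hx : ψ x = r) (t : ℝ) :
    r ≤ t ↔ ∀ k, A k (0, 1) * t ≤ c k - A k (x, 0) := by
  have hA (k : Fin p) : A k (x, t) = A k (x, 0) + t * A k (0, 1) := by
    rw [← smul_eq_mul, ← map_smul, ← map_add]; simp
  have hxr : (x, r) ∈ M := by
    have : (x, r) ∈ epigraph ψ := hx.le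
    rw [hepi] at this; exact this.1
  have : r ≤ t ↔ (x, t) ∈ epigraph ψ := by simp [epigraph, hx]
  rw [this, hepi]
  simp only [Set.mem_ofPred_eq, M.mk_mem_of_vertical_mem_direction hv hxr t, true_and, hA]
  exact forall_congr' fun k => by constructor <;> intro <;> linarith

theorem IsGPCF.exists_eq_ciSup_affine {ψ : X → EReal} (hψ : IsGPCF X ψ) (hp : ProperFn ψ) :
    ∃ (κ : Type) (_ : Finite κ) (_ : Nonempty κ) (a : κ → X →ᴬ[ℝ] ℝ),
      ∀ x ∈ domFn ψ, ψ x = ↑(⨆ k, a k x) := by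
  obtain ⟨M, p, A, c, -, hepi⟩ := hψ
  obtain ⟨⟨x₀, hx₀⟩, hbot⟩ := hp
  have hv := vertical_mem_direction_of_epigraph_subset (hepi.le.trans fun _ hq => hq.1) hx₀
  have hfibre (x : X) (hx : x ∈ domFn ψ) :=
    le_iff_forall_mul_le_of_epigraph_eq hepi hv (EReal.coe_toReal hx (hbot x)).symm
  have : Nonempty {k // A k (0, 1) < 0} :=
    nonempty_subtype.2 (exists_neg_of_forall_le_iff_forall_mul_le (hfibre x₀ hx₀))
  -- `a k x = (c k - A k (x, 0)) / A k (0, 1)`, the `k`-th lower bound on `t` in the fibre over `x`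
  let a (k : {k // A k (0, 1) < 0}) : X →ᴬ[ℝ] ℝ := (A k (0, 1))⁻¹ •
    (ContinuousAffineMap.const ℝ X (c k) - ((A k).comp (.inl ℝ X ℝ)).toContinuousAffineMap)
  refine ⟨_, inferInstance, this, a, fun x hx => ?_⟩
  rw [← EReal.coe_toReal hx (hbot x), eq_ciSup_div_of_forall_le_iff_forall_mul_le (hfibre x hx)]
  simp [a, div_eq_inv_mul]

end Epigraph

section Convexity

variable {E : Type*} [AddCommGroup E] [Module ℝ E] {s : Set E}

theorem AffineMap.concaveOn (f : E →ᵃ[ℝ] ℝ) (hs : Convex ℝ s) : ConcaveOn ℝ s f :=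
  ⟨hs, fun _ _ _ _ _ _ _ _ hab => (Convex.combo_affine_apply hab).ge⟩

theorem AffineMap.convexOn (f : E →ᵃ[ℝ] ℝ) (hs : Convex ℝ s) : ConvexOn ℝ s f :=
  ⟨hs, fun _ _ _ _ _ _ _ _ hab => (Convex.combo_affine_apply hab).le⟩

theorem ConvexOn.ciSup {ι : Type*} [Finite ι] [Nonempty ι] {f : ι → E → ℝ}
    (hf : ∀ i, ConvexOn ℝ s (f i)) : ConvexOn ℝ s fun x => ⨆ i, f i x := by
  refine ⟨(hf (Classical.arbitrary ι)).1, fun x hx y hy a b ha hb hab => ciSup_le fun i => ?_⟩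
  have hbdd (z : E) : BddAbove (Set.range fun i => f i z) := Finite.bddAbove_range _
  show f i (a • x + b • y) ≤ a • (⨆ i, f i x) + b • ⨆ i, f i y
  calc f i (a • x + b • y) ≤ a • f i x + b • f i y := (hf i).2 hx hy ha hb hab
    _ ≤ a • (⨆ i, f i x) + b • ⨆ i, f i y := by
      simp only [smul_eq_mul]
      gcongr <;> exact le_ciSup (hbdd _) i

theorem convex_setOf_forall_mem_forall_not_mem_lt {κ : Type*} (a : κ → E →ᵃ[ℝ] ℝ) (T : Set κ) :
    Convex ℝ {x | ∀ j ∈ T, ∀ j' ∉ T, a j' x < a j x} := by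
  simp only [Set.ofPred_forall]
  refine convex_iInter fun j => convex_iInter fun _ => convex_iInter fun j' =>
    convex_iInter fun _ => ?_
  have : {x | a j' x < a j x} = (a j' - a j) ⁻¹' Set.Iio 0 := by
    ext; simp
  exact this ▸ (convex_Iio 0).affine_preimage _

end Convexity

section PiecewiseAffine

variable {X : Type*} [TopologicalSpace X] {κ : Type*} [Finite κ] {a : κ → X → ℝ}

theorem isOpen_setOf_forall_mem_forall_not_mem_lt (ha : ∀ j, Continuous (a j)) (T : Set κ) :
    IsOpen {x | ∀ j ∈ T, ∀ j' ∉ T, a j' x < a j x} := by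
  simp only [Set.ofPred_forall]
  exact isOpen_iInter_of_finite fun j => isOpen_iInter_of_finite fun _ =>
    isOpen_iInter_of_finite fun j' => isOpen_iInter_of_finite fun _ => isOpen_lt (ha j') (ha j)

variable [Nonempty κ]

theorem eventually_exists_iSup_eq_of_continuous (ha : ∀ j, Continuous (a j))
    (z : X) : ∀ᶠ x in 𝓝 z, ∃ j, a j z = ⨆ j, a j z ∧ a j x = ⨆ j, a j x := by
  obtain ⟨j₀, hj₀⟩ := exists_eq_ciSup_of_finite (f := fun j => a j z)
  have hstrict : ∀ᶠ x in 𝓝 z, ∀ j, a j z < a j₀ z → a j x < a j₀ x :=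
    Filter.eventually_all.2 fun j => by
      by_cases hj : a j z < a j₀ z
      · filter_upwards [(ha j).continuousAt.eventually_lt (ha j₀).continuousAt hj] with x hx
        exact fun _ => hx
      · exact Filter.Eventually.of_forall fun _ h => absurd h hj
  filter_upwards [hstrict] with x hx
  obtain ⟨j, hj⟩ := exists_eq_ciSup_of_finite (f := fun j => a j x)
  refine ⟨j, le_antisymm (le_ciSup (Finite.bddAbove_range fun j => a j z) j) ?_, hj⟩
  by_contra! hlt
  have := hx j (hj₀ ▸ hlt)
  linarith [le_ciSup (Finite.bddAbove_range fun j => a j x) j₀]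

variable [AddCommGroup X] [Module ℝ X] {C : Set X} {G : X → ℝ}

theorem isLocalMinOn_sub_ciSup_iff [IsTopologicalAddGroup X] [ContinuousSMul ℝ X]
    (hG : ConvexOn ℝ C G) (ha : ∀ j, Continuous (a j)) (ha' : ∀ j, ConcaveOn ℝ C (a j))
    {z : X} (hz : z ∈ C) :
    IsLocalMinOn (fun x => G x - ⨆ j, a j x) C z ↔
      ∀ j, a j z = ⨆ j, a j z → IsMinOn (fun x => G x - a j x) C z := by
  constructor
  · intro hmin j hj
    refine IsMinOn.of_isLocalMinOn_of_convexOn hz ?_ (hG.sub (ha' j))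
    filter_upwards [hmin] with x hx
    linarith [le_ciSup (Finite.bddAbove_range fun j => a j x) j]
  · intro hmin
    filter_upwards [nhdsWithin_le_nhds (eventually_exists_iSup_eq_of_continuous ha z),
      self_mem_nhdsWithin] with x ⟨j, hjz, hjx⟩ hx
    simpa [hjz, hjx] using isMinOn_iff.1 (hmin j hjz) x hx

theorem setOf_isLocalMinOn_sub_ciSup_eq [IsTopologicalAddGroup X] [ContinuousSMul ℝ X]
    (hG : ConvexOn ℝ C G) (ha : ∀ j, Continuous (a j)) (ha' : ∀ j, ConcaveOn ℝ C (a j)) :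
    {x | x ∈ C ∧ IsLocalMinOn (fun x => G x - ⨆ j, a j x) C x} =
      ⋃ T : {T : Set κ // T.Nonempty},
        {x | x ∈ C ∧ ∀ j ∈ T.1, IsMinOn (fun x => G x - a j x) C x} ∩
          (C ∩ {x | ∀ j ∈ T.1, ∀ j' ∉ T.1, a j' x < a j x}) := by
  ext x
  simp only [Set.mem_iUnion, Set.mem_inter_iff, Set.mem_ofPred_eq]
  constructor
  · rintro ⟨hx, hmin⟩
    refine ⟨⟨{j | a j x = ⨆ j, a j x}, exists_eq_ciSup_of_finite⟩,
      ⟨hx, (isLocalMinOn_sub_ciSup_iff hG ha ha' hx).1 hmin⟩, hx, fun j hj j' hj' => ?_⟩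
    exact hj ▸ (le_ciSup (Finite.bddAbove_range fun j => a j x) j').lt_of_ne hj'
  · rintro ⟨⟨T, j₁, hj₁⟩, ⟨hx, hT⟩, -, hV⟩
    refine ⟨hx, (isLocalMinOn_sub_ciSup_iff hG ha ha' hx).2 fun j hj => hT j ?_⟩
    by_contra hjT
    linarith [hV j₁ hj₁ j hjT, le_ciSup (Finite.bddAbove_range fun j => a j x) j₁]

end PiecewiseAffine

theorem setOf_isMinOn_sub_ciSup_eq {X κ : Type*} [Finite κ] [Nonempty κ] {C : Set X}
    {G : X → ℝ} {a : κ → X → ℝ} {z : X} (hz : z ∈ C)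
    (hmin : IsMinOn (fun x => G x - ⨆ j, a j x) C z) :
    {x | x ∈ C ∧ IsMinOn (fun x => G x - ⨆ j, a j x) C x} =
      ⋃ j, {x | x ∈ C ∧ G x - a j x ≤ G z - ⨆ j, a j z} := by
  ext x
  simp only [Set.mem_iUnion, Set.mem_ofPred_eq]
  constructor
  · rintro ⟨hx, hxmin⟩
    obtain ⟨j, hj⟩ := exists_eq_ciSup_of_finite (f := fun j => a j x)
    exact ⟨j, hx, hj ▸ isMinOn_iff.1 hxmin z hz⟩
  · rintro ⟨j, hx, hle⟩
    refine ⟨hx, isMinOn_iff.2 fun y hy => ?_⟩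
    linarith [isMinOn_iff.1 hmin y hy, le_ciSup (Finite.bddAbove_range fun j => a j x) j]

section DCObjective

variable {X : Type*} {g h : X → EReal} {C : Set X} {F : X → ℝ}

theorem dcObj_eq_coe_sub {x : X} {G H : ℝ} (hg : g x = G) (hh : h x = H) :
    dcObj g h x = ↑(G - H) := by
  simp [dcObj, hg, hh, EReal.coe_sub]

variable [TopologicalSpace X]

theorem isLocalSolution_iff (hF : ∀ x ∈ C, dcObj g h x = F x) {z : X} :
    IsLocalSolution g h C z ↔ z ∈ C ∧ IsLocalMinOn F C z := by
  refine and_congr_right fun hz => ?_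
  rw [IsLocalMinOn, IsMinFilter, Filter.Eventually, mem_nhdsWithin_iff_exists_mem_nhds_inter]
  refine exists_congr fun U => and_congr_right fun _ =>
    ⟨fun hU x hx => ?_, fun hU x hx => ?_⟩
  · simpa [hF z hz, hF x hx.2] using hU x ⟨hx.2, hx.1⟩
  · simpa [hF z hz, hF x hx.1] using hU ⟨hx.2, hx.1⟩

omit [TopologicalSpace X] in
theorem isSolution_iff (hF : ∀ x ∈ C, dcObj g h x = F x) {z : X} :
    IsSolution g h C z ↔ z ∈ C ∧ IsMinOn F C z := by
  refine and_congr_right fun hz => ?_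
  rw [isMinOn_iff]
  exact forall₂_congr fun x hx => by simp [hF z hz, hF x hx]

end DCObjective

theorem exists_fin_iUnion_eq {α ι : Type*} [Finite ι] {P : Set α → Prop} {A : ι → Set α}
    (hA : ∀ i, P (A i)) : ∃ (n : ℕ) (B : Fin n → Set α), (∀ i, P (B i)) ∧ ⋃ i, A i = ⋃ i, B i := by
  obtain ⟨n, ⟨e⟩⟩ := Finite.exists_equiv_fin ι
  exact ⟨n, A ∘ e.symm, fun i => hA _, (e.symm.surjective.iUnion_comp A).symm⟩

theorem stmt9_general {X : Type*} [AddCommGroup X] [Module ℝ X] [TopologicalSpace X]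
    [IsTopologicalAddGroup X] [ContinuousSMul ℝ X]
    (g h : X → EReal)
    (hg2 : ProperFn g) (hg3 : IsGPCF X g)
    (hh2 : ProperFn h) (hh3 : IsGPCF X h)
    (C : Set X) (hC2 : IsGPCS X C)
    (hCg : C ⊆ domFn g) (hCh : C ⊆ interior (domFn h)) :
    (∃ (n : ℕ) (A : Fin n → Set X), (∀ i, IsSemiClosedGPCSIn C (A i)) ∧
      {x : X | IsLocalSolution g h C x} = ⋃ i, A i) ∧
    (∃ (m : ℕ) (B : Fin m → Set X), (∀ i, IsGPCS X (B i)) ∧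
      {x : X | IsSolution g h C x} = ⋃ i, B i) := by
  obtain ⟨ι, _, _, b, hb⟩ := hg3.exists_eq_ciSup_affine hg2
  obtain ⟨κ, _, _, a, ha⟩ := hh3.exists_eq_ciSup_affine hh2
  have hF (x : X) (hx : x ∈ C) : dcObj g h x = ↑((⨆ i, b i x) - ⨆ j, a j x) :=
    dcObj_eq_coe_sub (hb x (hCg hx)) (ha x (interior_subset (hCh hx)))
  have hCconv := hC2.convex
  constructor
  · simp_rw [isLocalSolution_iff hF]
    rw [setOf_isLocalMinOn_sub_ciSup_eq (G := fun x => ⨆ i, b i x) (a := fun j => a j)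
      (ConvexOn.ciSup fun i => (b i).toAffineMap.convexOn hCconv) (fun j => (a j).continuous)
      (fun j => (a j).toAffineMap.concaveOn hCconv)]
    exact exists_fin_iUnion_eq fun T =>
      (hC2.sep_forall_mem_isMinOn b a T).isSemiClosedGPCSIn_inter (fun _ hx => hx.1) hCconv
        (convex_setOf_forall_mem_forall_not_mem_lt (fun j => (a j).toAffineMap) T)
        (isOpen_setOf_forall_mem_forall_not_mem_lt (fun j => (a j).continuous) T)
  · by_cases hS : ∃ z, IsSolution g h C z
    · obtain ⟨z, hz⟩ := hS
      rw [isSolution_iff hF] at hz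
      simp_rw [isSolution_iff hF]
      rw [setOf_isMinOn_sub_ciSup_eq hz.1 hz.2]
      exact exists_fin_iUnion_eq fun j => hC2.sep_ciSup_sub_le b (a j) _
    · exact ⟨0, Fin.elim0, fun i => i.elim0, by simpa [Set.eq_empty_iff_forall_notMem] using hS⟩

/-- for a gpdc program, the local solution set is the union of finitely
many semi-closed generalized polyhedral convex subsets of `C`, and the global solution
set is the union of finitely many generalized polyhedral convex sets. -/
theorem stmt9 {X : Type*} [AddCommGroup X] [Module ℝ X] [TopologicalSpace X]
    [IsTopologicalAddGroup X] [ContinuousSMul ℝ X] [LocallyConvexSpace ℝ X] [T2Space X]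
    (g h : X → EReal)
    (hg2 : ProperFn g) (hg3 : IsGPCF X g)
    (hh2 : ProperFn h) (hh3 : IsGPCF X h)
    (C : Set X) (hC1 : C.Nonempty) (hC2 : IsGPCS X C)
    (hCg : C ⊆ domFn g) (hCh : C ⊆ interior (domFn h)) :
    (∃ (n : ℕ) (A : Fin n → Set X), (∀ i, IsSemiClosedGPCSIn C (A i)) ∧
      {x : X | IsLocalSolution g h C x} = ⋃ i, A i) ∧
    (∃ (m : ℕ) (B : Fin m → Set X), (∀ i, IsGPCS X (B i)) ∧
      {x : X | IsSolution g h C x} = ⋃ i, B i) :=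
  stmt9_general g h hg2 hg3 hh2 hh3 C hC2 hCg hCh
end

section
/- Let g: X → ℝ ∪ {+∞} be a lower semicontinuous, proper, convex function, h: X → ℝ ∪ {+∞} a proper generalized polyhedral convex function, and C ⊆ X a nonempty closed convex set with C ⊆ dom g and C ⊆ int(dom h). If the restriction of g to each line segment contained in C is continuous, then every connected component of the local solution set S₁ of the problem: minimize f(x) = g(x) − h(x) subject to x ∈ C, is a union of finitely many convex sets, and f is constant on each connected component of S₁. -/
open Pointwise Topology

/-!
On `C` the polyhedral function `h` is the maximum of finitely many continuous affine functions
`φ i`, so `f = G - max_i φ i` with `G` convex and real-valued. A point `x ∈ C` is a local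
solution iff it minimises the convex function `G - φ i` over `C` for every index `i` active at
`x`: a local minimiser of a convex function is global, and conversely near `x` only indices
active at `x` stay active. Hence the local solution set is covered by the convex sets of points
with a prescribed active set `J` minimising every `G - φ i`, `i ∈ J`, and a connected component
is the union of those pieces it meets. Near a local solution `x`, any `y ∈ S₁` has an active
index `i` that is also active at `x`, and both minimise `G - φ i`, so `f y = f x`: `f` is
locally constant on `S₁`, hence constant on its components.
-/

section FiniteMax

variable {X ι : Type*} [Finite ι]

theorem le_ciSup_of_finite (f : ι → ℝ) (i : ι) : f i ≤ ⨆ j, f j :=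
  le_ciSup (Finite.bddAbove_range f) i

theorem eventually_forall_eq_ciSup_imp [TopologicalSpace X] [Nonempty ι] {f : ι → X → ℝ} {x : X}
    (hf : ∀ i, ContinuousAt (f i) x) :
    ∀ᶠ y in 𝓝 x, ∀ i, f i y = ⨆ j, f j y → f i x = ⨆ j, f j x := by
  obtain ⟨i₀, hi₀⟩ := exists_eq_ciSup_of_finite (f := fun i => f i x)
  refine Filter.eventually_all.2 fun i => ?_
  by_cases hi : f i x = ⨆ j, f j x
  · exact .of_forall fun _ _ => hi
  have hlt : f i x < f i₀ x := by
    rw [hi₀]; exact (le_ciSup_of_finite (f · x) i).lt_of_ne hi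
  filter_upwards [(hf i).eventually_lt (hf i₀) hlt] with y hy hiy
  exact absurd (hiy ▸ le_ciSup_of_finite (f · y) i₀) hy.not_ge

end FiniteMax

theorem IsPreconnected.subset_connectedComponentIn_of_inter_nonempty {X : Type*}
    [TopologicalSpace X] {s F : Set X} {x : X} (hs : IsPreconnected s) (hsF : s ⊆ F)
    (h : (s ∩ _root_.connectedComponentIn F x).Nonempty) :
    s ⊆ _root_.connectedComponentIn F x := by
  obtain ⟨y, hys, hy⟩ := h
  rw [connectedComponentIn_eq hy]
  exact hs.subset_connectedComponentIn hys hsF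

theorem IsPreconnected.eq_of_eventually_eq {X β : Type*} [TopologicalSpace X] {S : Set X}
    {f : X → β} (hS : IsPreconnected S) (hf : ∀ x ∈ S, ∀ᶠ y in 𝓝[S] x, f y = f x) {x y : X}
    (hx : x ∈ S) (hy : y ∈ S) : f y = f x :=
  hS.induction₂ (fun a b => f b = f a) hf (fun _ _ _ _ _ _ hab hbc => hbc.trans hab)
    (fun _ _ _ _ => Eq.symm) hx hy

theorem exists_fin_convex_connectedComponentIn_eq_iUnion {X ι : Type*} [AddCommGroup X]
    [Module ℝ X] [TopologicalSpace X] [IsTopologicalAddGroup X] [ContinuousSMul ℝ X] [Finite ι]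
    {E : ι → Set X} (hE : ∀ i, Convex ℝ (E i)) (x : X) :
    ∃ (n : ℕ) (A : Fin n → Set X), (∀ i, Convex ℝ (A i)) ∧
      connectedComponentIn (⋃ i, E i) x = ⋃ i, A i := by
  set K := connectedComponentIn (⋃ i, E i) x
  have hconv : ∀ i, Convex ℝ (E i ∩ K) := by
    intro i
    by_cases hi : (E i ∩ K).Nonempty
    · rw [Set.inter_eq_left.2 ((hE i).isPreconnected.subset_connectedComponentIn_of_inter_nonempty
        (Set.subset_iUnion E i) hi)]
      exact hE i
    · rw [Set.not_nonempty_iff_eq_empty.1 hi]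
      exact convex_empty
  have hK : K = ⋃ i, E i ∩ K := by
    rw [← Set.iUnion_inter, Set.inter_eq_right.2 (connectedComponentIn_subset _ _)]
  obtain ⟨n, ⟨e⟩⟩ := Finite.exists_equiv_fin ι
  exact ⟨n, fun k => E (e.symm k) ∩ K, fun k => hconv _,
    hK.trans (e.symm.iSup_comp (g := fun i => E i ∩ K)).symm⟩

theorem ContinuousAffineMap.concaveOn {X : Type*} [AddCommGroup X] [Module ℝ X]
    [TopologicalSpace X] (f : X →ᴬ[ℝ] ℝ) {C : Set X} (hC : Convex ℝ C) : ConcaveOn ℝ C f :=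
  ⟨hC, fun _ _ _ _ _ _ _ _ hab => (Convex.combo_affine_apply (f := f.toAffineMap) hab).ge⟩

theorem ConvexOn.convex_setOf_isMinOn {X : Type*} [AddCommGroup X] [Module ℝ X] {C : Set X}
    {G : X → ℝ} (hG : ConvexOn ℝ C G) : Convex ℝ {x ∈ C | IsMinOn G C x} := by
  rintro x ⟨hxC, hx⟩ y ⟨hyC, hy⟩ a b ha hb hab
  refine ⟨hG.1 hxC hyC ha hb hab, fun w hw => ?_⟩
  calc G (a • x + b • y) ≤ a • G x + b • G y := hG.2 hxC hyC ha hb hab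
    _ ≤ a • G w + b • G w := by gcongr; exacts [hx hw, hy hw]
    _ = G w := by rw [← add_smul, hab, one_smul]

theorem isLUB_range_div_of_forall_le_iff {κ : Type*} {r : ℝ} {A β c : κ → ℝ}
    (h : ∀ t, r ≤ t ↔ ∀ k, A k + t * β k ≤ c k) :
    IsLUB (Set.range fun k : {k // β k < 0} => (c k - A k) / β k) r := by
  have hβ : ∀ k, β k ≤ 0 := by
    intro k
    by_contra! hk
    set t := max r ((c k - A k) / β k + 1)
    have hlt : (c k - A k) / β k < t := (lt_add_one _).trans_le (le_max_right _ _)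
    have := (h t).1 (le_max_left _ _) k
    rw [div_lt_iff₀ hk] at hlt
    linarith
  rw [isLUB_iff_le_iff]
  intro t
  simp only [h, mem_upperBounds, Set.forall_mem_range, Subtype.forall]
  refine forall_congr' fun k => ?_
  rcases (hβ k).lt_or_eq with hk | hk
  · simp only [hk, forall_true_left, div_le_iff_of_neg hk]
    constructor <;> intro <;> linarith
  · have hAc := (h r).1 le_rfl k
    simp only [hk, mul_zero, add_zero, lt_irrefl, IsEmpty.forall_iff, iff_true] at hAc ⊢
    exact hAc

theorem AffineSubspace.prodMk_mem_of_mem_of_mem {X : Type*} [AddCommGroup X] [Module ℝ X]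
    {L : AffineSubspace ℝ (X × ℝ)} {x : X} {r : ℝ} (h₀ : (x, r) ∈ L) (h₁ : (x, r + 1) ∈ L)
    (t : ℝ) : (x, t) ∈ L := by
  convert AffineMap.lineMap_mem (t - r) h₀ h₁ using 1
  simp [AffineMap.lineMap_apply]

theorem EReal.eq_coe_of_isLUB {κ : Type*} [Finite κ] {e : EReal} {m : κ → ℝ}
    (hbot : e ≠ ⊥) (htop : e ≠ ⊤) (h : IsLUB (Set.range m) e.toReal) :
    Nonempty κ ∧ e = ((⨆ k, m k : ℝ) : EReal) := by
  have : Nonempty κ := by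
    by_contra! hκ
    simp only [Set.range_eq_empty, isLUB_empty_iff] at h
    exact not_isBot _ h
  exact ⟨this, by rw [h.ciSup_eq, EReal.coe_toReal htop hbot]⟩

theorem IsGPCF.exists_eq_ciSup {X : Type*} [AddCommGroup X] [Module ℝ X] [TopologicalSpace X]
    {h : X → EReal} (hh : IsGPCF X h) (hp : ProperFn h) :
    ∃ (ι : Type) (_ : Finite ι) (_ : Nonempty ι) (φ : ι → X →ᴬ[ℝ] ℝ),
      ∀ x ∈ domFn h, h x = ((⨆ i, φ i x : ℝ) : EReal) := by
  obtain ⟨L, p, a, c, -, hepi⟩ := hh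
  set β : Fin p → ℝ := fun k => a k (0, 1)
  -- For `β k < 0`, the constraint `a k (x, t) ≤ c k` reads `φ k x ≤ t`.
  let φ : {k // β k < 0} → X →ᴬ[ℝ] ℝ := fun k =>
    (-(β k)⁻¹) • ((a k).comp (.inl ℝ X ℝ)).toContinuousAffineMap + .const ℝ X (c k / β k)
  have hφ : ∀ k x, φ k x = (c k - a k (x, 0)) / β k := by
    intro k x
    simp only [φ, neg_smul, ContinuousAffineMap.coe_add, ContinuousAffineMap.coe_neg,
      ContinuousAffineMap.coe_smul, ContinuousLinearMap.coe_toContinuousAffineMap,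
      ContinuousAffineMap.coe_const, Pi.add_apply, Pi.neg_apply, Pi.smul_apply,
      ContinuousLinearMap.comp_apply, ContinuousLinearMap.inl_apply, smul_eq_mul,
      Function.const_apply]
    ring
  have hlub : ∀ x ∈ domFn h, IsLUB (Set.range fun k => φ k x) (h x).toReal := by
    intro x hx
    have hr : h x = ((h x).toReal : EReal) := (EReal.coe_toReal hx (hp.2 x)).symm
    have hepi_iff : ∀ t : ℝ, (h x).toReal ≤ t ↔ (x, t) ∈ L ∧ ∀ k, a k (x, t) ≤ c k := by
      intro t
      rw [← EReal.coe_le_coe_iff, ← hr]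
      exact Set.ext_iff.1 hepi (x, t)
    have hL : ∀ t : ℝ, (x, t) ∈ L := AffineSubspace.prodMk_mem_of_mem_of_mem
      ((hepi_iff _).1 le_rfl).1 ((hepi_iff _).1 (by linarith)).1
    have hsplit : ∀ k (t : ℝ), a k (x, t) = a k (x, 0) + t * β k := by
      intro k t
      rw [← smul_eq_mul, ← map_smul, ← map_add]
      simp
    simp only [hφ]
    exact isLUB_range_div_of_forall_le_iff (A := fun k => a k (x, 0)) fun t => by
      rw [hepi_iff]; simp only [hL, true_and]; exact forall_congr' fun k => by rw [hsplit k t]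
  obtain ⟨x₀, hx₀⟩ := hp.1
  refine ⟨_, inferInstance, (EReal.eq_coe_of_isLUB (hp.2 x₀) hx₀ (hlub x₀ hx₀)).1, φ,
    fun x hx => (EReal.eq_coe_of_isLUB (hp.2 x) hx (hlub x hx)).2⟩

section DCProgram

variable {X ι : Type*} [AddCommGroup X] [Module ℝ X] [TopologicalSpace X]
  [Finite ι] [Nonempty ι] (φ : ι → X →ᴬ[ℝ] ℝ)

def activeIndices (x : X) : Set ι := {i | φ i x = ⨆ j, φ j x}

theorem convex_setOf_activeIndices_eq (J : Set ι) : Convex ℝ {x | activeIndices φ x = J} := by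
  rintro x hx y hy a b ha hb hab
  have hcomb : ∀ i, φ i (a • x + b • y) = a * φ i x + b * φ i y := fun i =>
    Convex.combo_affine_apply (f := (φ i).toAffineMap) hab
  obtain ⟨i₀, hi₀⟩ := exists_eq_ciSup_of_finite (f := fun i => φ i x)
  have hi₀y : φ i₀ y = ⨆ j, φ j y := by
    change i₀ ∈ activeIndices φ y; rw [hy, ← hx]; exact hi₀
  have hmax : (⨆ j, φ j (a • x + b • y)) = a * (⨆ j, φ j x) + b * ⨆ j, φ j y := by
    refine le_antisymm (ciSup_le fun j => ?_) ?_
    · rw [hcomb]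
      gcongr <;> exact le_ciSup_of_finite (φ · _) j
    · rw [← hi₀, ← hi₀y, ← hcomb]
      exact le_ciSup_of_finite (φ · _) i₀
  ext i
  change φ i _ = _ ↔ _
  have hix := le_ciSup_of_finite (φ · x) i
  have hiy := le_ciSup_of_finite (φ · y) i
  rw [hcomb, hmax]
  constructor
  · -- the gaps `⨆ j, φ j - φ i` at `x` and `y` are nonnegative with vanishing weighted sum
    intro h
    rcases ha.lt_or_eq with ha | rfl
    · rw [← hx]; change φ i x = _; nlinarith
    · rw [← hy]; change φ i y = _; rw [zero_add] at hab; subst hab; linarith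
  · intro hi
    rw [show φ i x = _ from hx ▸ hi, show φ i y = _ from hy ▸ hi]

variable (C : Set X) (G : X → ℝ)

def dcPiece (J : Set ι) : Set X :=
  {x ∈ C | activeIndices φ x = J ∧ ∀ i ∈ J, IsMinOn (G - ⇑(φ i)) C x}

variable {C G}

theorem convex_dcPiece (hG : ConvexOn ℝ C G) (J : Set ι) : Convex ℝ (dcPiece φ C G J) := by
  rintro x ⟨hxC, hxJ, hx⟩ y ⟨hyC, hyJ, hy⟩ a b ha hb hab
  refine ⟨hG.1 hxC hyC ha hb hab, convex_setOf_activeIndices_eq φ J hxJ hyJ ha hb hab,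
    fun i hi => ?_⟩
  exact ((hG.sub ((φ i).concaveOn hG.1)).convex_setOf_isMinOn ⟨hxC, hx i hi⟩ ⟨hyC, hy i hi⟩
    ha hb hab).2

variable [IsTopologicalAddGroup X] [ContinuousSMul ℝ X]

theorem isLocalMinOn_sub_ciSup_iff_s12 (hG : ConvexOn ℝ C G) {x : X} (hx : x ∈ C) :
    IsLocalMinOn (fun y => G y - ⨆ i, φ i y) C x ↔
      ∀ i ∈ activeIndices φ x, IsMinOn (G - ⇑(φ i)) C x := by
  constructor
  · intro h i hi
    refine IsMinOn.of_isLocalMinOn_of_convexOn hx ?_ (hG.sub ((φ i).concaveOn hG.1))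
    filter_upwards [h] with y hy
    have := le_ciSup_of_finite (φ · y) i
    change G x - φ i x ≤ G y - φ i y
    rw [show φ i x = _ from hi]
    linarith
  · intro h
    filter_upwards [nhdsWithin_le_nhds
      (eventually_forall_eq_ciSup_imp fun i => (φ i).continuous.continuousAt),
      self_mem_nhdsWithin] with y hact hyC
    obtain ⟨i, hi⟩ := exists_eq_ciSup_of_finite (f := fun i => φ i y)
    have hmin : G x - φ i x ≤ G y - φ i y := h i (hact i hi) hyC
    change G x - _ ≤ G y - _
    rw [← hi, ← hact i hi]
    exact hmin

theorem setOf_isLocalMinOn_eq_iUnion_dcPiece (hG : ConvexOn ℝ C G) :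
    {x ∈ C | IsLocalMinOn (fun y => G y - ⨆ i, φ i y) C x} = ⋃ J, dcPiece φ C G J := by
  ext x
  simp only [Set.mem_ofPred_eq, Set.mem_iUnion, dcPiece]
  constructor
  · rintro ⟨hxC, hx⟩
    exact ⟨_, hxC, rfl, (isLocalMinOn_sub_ciSup_iff_s12 φ hG hxC).1 hx⟩
  · rintro ⟨J, hxC, rfl, hx⟩
    exact ⟨hxC, (isLocalMinOn_sub_ciSup_iff_s12 φ hG hxC).2 hx⟩

theorem eventually_sub_ciSup_eq (hG : ConvexOn ℝ C G) {x : X}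
    (hx : x ∈ {x ∈ C | IsLocalMinOn (fun y => G y - ⨆ i, φ i y) C x}) :
    ∀ᶠ y in 𝓝[{x ∈ C | IsLocalMinOn (fun y => G y - ⨆ i, φ i y) C x}] x,
      G y - ⨆ i, φ i y = G x - ⨆ i, φ i x := by
  filter_upwards [nhdsWithin_le_nhds
    (eventually_forall_eq_ciSup_imp fun i => (φ i).continuous.continuousAt),
    self_mem_nhdsWithin] with y hact ⟨hyC, hy⟩
  obtain ⟨i, hi⟩ := exists_eq_ciSup_of_finite (f := fun i => φ i y)
  have hxi : IsMinOn (G - ⇑(φ i)) C x :=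
    (isLocalMinOn_sub_ciSup_iff_s12 φ hG hx.1).1 hx.2 i (hact i hi)
  have hyi : IsMinOn (G - ⇑(φ i)) C y := (isLocalMinOn_sub_ciSup_iff_s12 φ hG hyC).1 hy i hi
  rw [← hi, ← hact i hi]
  exact le_antisymm (hyi hx.1) (hxi hyC)

end DCProgram

theorem ConvexFn.convexOn_toReal {X : Type*} [AddCommGroup X] [Module ℝ X] {g : X → EReal}
    (hg : ConvexFn g) (hbot : ∀ x, g x ≠ ⊥) {C : Set X} (hC : Convex ℝ C) (hCg : C ⊆ domFn g) :
    ConvexOn ℝ C fun x => (g x).toReal := by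
  have hcoe : ∀ x ∈ C, g x = ((g x).toReal : EReal) := fun x hx =>
    (EReal.coe_toReal (hCg hx) (hbot x)).symm
  refine ⟨hC, fun x hx y hy a b ha hb hab => ?_⟩
  have hxy := hg (x := (x, (g x).toReal)) (y := (y, (g y).toReal)) (hcoe x hx).le (hcoe y hy).le
    ha hb hab
  rw [← EReal.coe_le_coe_iff, ← hcoe _ (hC hx hy ha hb hab)]
  exact hxy

theorem dcObj_eq_coe_sub_s12 {X : Type*} {g h : X → EReal} {x : X} {r : ℝ} (hgt : g x ≠ ⊤)
    (hgb : g x ≠ ⊥) (hh : h x = r) : dcObj g h x = ((g x).toReal - r : ℝ) := by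
  rw [dcObj, if_neg fun h => hgt h.1, hh, EReal.coe_sub, EReal.coe_toReal hgt hgb]

theorem setOf_isLocalSolution_eq {X : Type*} [TopologicalSpace X] {g h : X → EReal} {C : Set X}
    {F : X → ℝ} (hF : ∀ x ∈ C, dcObj g h x = F x) :
    {x | IsLocalSolution g h C x} = {x ∈ C | IsLocalMinOn F C x} := by
  ext x
  constructor
  · rintro ⟨hxC, U, hU, hmin⟩
    refine ⟨hxC, Filter.mem_of_superset (inter_mem_nhdsWithin C hU) fun y hy => ?_⟩
    change F x ≤ F y
    simpa only [hF x hxC, hF y hy.1, EReal.coe_le_coe_iff] using hmin y hy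
  · rintro ⟨hxC, hmin⟩
    rw [IsLocalMinOn, IsMinFilter, eventually_nhdsWithin_iff] at hmin
    refine ⟨hxC, _, hmin, fun y ⟨hyC, hy⟩ => ?_⟩
    rw [hF x hxC, hF y hyC, EReal.coe_le_coe_iff]
    exact hy hyC

theorem stmt12_general {X : Type*} [AddCommGroup X] [Module ℝ X] [TopologicalSpace X]
    [IsTopologicalAddGroup X] [ContinuousSMul ℝ X]
    (g h : X → EReal)
    (hg2 : ProperFn g) (hg3 : ConvexFn g)
    (hh2 : ProperFn h) (hh3 : IsGPCF X h)
    (C : Set X) (hC3 : Convex ℝ C)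
    (hCg : C ⊆ domFn g) (hCh : C ⊆ interior (domFn h)) :
    ∀ x₀ ∈ {x : X | IsLocalSolution g h C x},
      (∃ (n : ℕ) (A : Fin n → Set X), (∀ i, Convex ℝ (A i)) ∧
        connectedComponentIn {x : X | IsLocalSolution g h C x} x₀ = ⋃ i, A i) ∧
      (∀ y ∈ connectedComponentIn {x : X | IsLocalSolution g h C x} x₀,
        dcObj g h y = dcObj g h x₀) := by
  intro x₀ hx₀
  obtain ⟨ι, _, _, φ, hφ⟩ := hh3.exists_eq_ciSup hh2
  have hG : ConvexOn ℝ C fun x => (g x).toReal := hg3.convexOn_toReal hg2.2 hC3 hCg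
  have hF : ∀ x ∈ C, dcObj g h x = ((g x).toReal - ⨆ i, φ i x : ℝ) := fun x hx =>
    dcObj_eq_coe_sub_s12 (hCg hx) (hg2.2 x) (hφ x (interior_subset (hCh hx)))
  rw [setOf_isLocalSolution_eq hF] at hx₀ ⊢
  refine ⟨setOf_isLocalMinOn_eq_iUnion_dcPiece φ hG ▸
    exists_fin_convex_connectedComponentIn_eq_iUnion (convex_dcPiece φ hG) x₀, fun y hy => ?_⟩
  have hKS := connectedComponentIn_subset
    {x ∈ C | IsLocalMinOn (fun x => (g x).toReal - ⨆ i, φ i x) C x} x₀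
  rw [hF y (hKS hy).1, hF x₀ hx₀.1, isPreconnected_connectedComponentIn.eq_of_eventually_eq
    (fun x hx => nhdsWithin_mono x hKS (eventually_sub_ciSup_eq φ hG (hKS hx)))
    (mem_connectedComponentIn hx₀) hy]

/-- if `g` is continuous on every line segment contained in `C`, then every
connected component of the local solution set `S₁` is a union of finitely many convex
sets, and the objective `f = g - h` is constant on each connected component of `S₁`. -/
theorem stmt12 {X : Type*} [AddCommGroup X] [Module ℝ X] [TopologicalSpace X]
    [IsTopologicalAddGroup X] [ContinuousSMul ℝ X] [LocallyConvexSpace ℝ X] [T2Space X]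
    (g h : X → EReal)
    (hg1 : LowerSemicontinuous g) (hg2 : ProperFn g) (hg3 : ConvexFn g)
    (hh2 : ProperFn h) (hh3 : IsGPCF X h)
    (C : Set X) (hC1 : C.Nonempty) (hC2 : IsClosed C) (hC3 : Convex ℝ C)
    (hCg : C ⊆ domFn g) (hCh : C ⊆ interior (domFn h))
    (hgseg : ∀ a b : X, segment ℝ a b ⊆ C → ContinuousOn g (segment ℝ a b)) :
    ∀ x₀ ∈ {x : X | IsLocalSolution g h C x},
      (∃ (n : ℕ) (A : Fin n → Set X), (∀ i, Convex ℝ (A i)) ∧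
        connectedComponentIn {x : X | IsLocalSolution g h C x} x₀ = ⋃ i, A i) ∧
      (∀ y ∈ connectedComponentIn {x : X | IsLocalSolution g h C x} x₀,
        dcObj g h y = dcObj g h x₀) :=
  stmt12_general g h hg2 hg3 hh2 hh3 C hC3 hCg hCh
end
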